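/- Completeness of LIK X: let X ⊆ {D,T,4}. Every formula that is forced at every world of every model based on a forward and downward confluent frame whose relation R is in addition serial if D ∈ X, reflexive if T ∈ X, and transitive if 4 ∈ X, is LIK X-derivable. -/
import Mathlib


/-- Formulas of intuitionistic modal logic. -/
inductive Formula : Type where
  | atom : ℕ → Formula
  | top  : Formula
  | bot  : Formula
  | and  : Formula → Formula → Formula
  | or   : Formula → Formula → Formula
  | imp  : Formula → Formula → Formula
  | box  : Formula → Formula
  | dia  : Formula → Formula
deriving DecidableEq

/-- A model: a frame `(W, ≤, R)` together with a monotone valuation. -/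
structure Model (W : Type) where
  le : W → W → Prop
  rel : W → W → Prop
  val : ℕ → W → Prop
  le_refl : ∀ x, le x x
  le_trans : ∀ x y z, le x y → le y z → le x z
  val_mono : ∀ p x y, le x y → val p x → val p y

/-- Forward confluence: `x ≤ x'` and `R x y` yield `y'` with `R x' y'` and `y ≤ y'`. -/
def ForwardConfluent {W : Type} (M : Model W) : Prop :=
  ∀ x x' y, M.le x x' → M.rel x y → ∃ y', M.rel x' y' ∧ M.le y y'

/-- Downward confluence: `x ≤ x'` and `R x' y'` yield `y` with `R x y` and `y ≤ y'`. -/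
def DownwardConfluent {W : Type} (M : Model W) : Prop :=
  ∀ x x' y', M.le x x' → M.rel x' y' → ∃ y, M.rel x y ∧ M.le y y'

/-- The local forcing relation. -/
def Force {W : Type} (M : Model W) : W → Formula → Prop
  | x, .atom p => M.val p x
  | _, .top => True
  | _, .bot => False
  | x, .and A B => Force M x A ∧ Force M x B
  | x, .or A B => Force M x A ∨ Force M x B
  | x, .imp A B => ∀ y, M.le x y → Force M y A → Force M y B
  | x, .box A => ∀ y, M.rel x y → Force M y A
  | x, .dia A => ∃ y, M.rel x y ∧ Force M y A

/-- The three optional extension axioms D, T, 4. -/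
inductive ModAx : Type where
  | D : ModAx
  | T : ModAx
  | Four : ModAx
deriving DecidableEq

/-- The Hilbert system LIK X: a complete Hilbert base for intuitionistic
propositional logic (as axiom schemata, hence all substitution instances of
IPL theorems are derivable), the modal axioms K□, K◇, N, DP, RV, the
extension axioms D, T, 4 according to membership in `X`, with rules
modus ponens and necessitation. -/
inductive LIK (X : Set ModAx) : Formula → Prop where
  | a1 (A B : Formula) : LIK X (A.imp (B.imp A))
  | a2 (A B C : Formula) : LIK X ((A.imp (B.imp C)).imp ((A.imp B).imp (A.imp C)))
  | a3 (A B : Formula) : LIK X ((A.and B).imp A)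
  | a4 (A B : Formula) : LIK X ((A.and B).imp B)
  | a5 (A B : Formula) : LIK X (A.imp (B.imp (A.and B)))
  | a6 (A B : Formula) : LIK X (A.imp (A.or B))
  | a7 (A B : Formula) : LIK X (B.imp (A.or B))
  | a8 (A B C : Formula) : LIK X ((A.imp C).imp ((B.imp C).imp ((A.or B).imp C)))
  | exfalso (A : Formula) : LIK X (Formula.bot.imp A)
  | truth : LIK X Formula.top
  | kbox (A B : Formula) :
      LIK X ((Formula.box (A.imp B)).imp ((Formula.box A).imp (Formula.box B)))
  | kdia (A B : Formula) :
      LIK X ((Formula.box (A.imp B)).imp ((Formula.dia A).imp (Formula.dia B)))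
  | nax : LIK X ((Formula.dia Formula.bot).imp Formula.bot)
  | dp (A B : Formula) :
      LIK X ((Formula.dia (A.or B)).imp ((Formula.dia A).or (Formula.dia B)))
  | rv (A B : Formula) :
      LIK X ((Formula.box (A.or B)).imp ((Formula.dia A).or (Formula.box B)))
  | dax : ModAx.D ∈ X → LIK X (Formula.dia Formula.top)
  | tax (A : Formula) : ModAx.T ∈ X →
      LIK X (((Formula.box A).imp A).and (A.imp (Formula.dia A)))
  | fourax (A : Formula) : ModAx.Four ∈ X →
      LIK X (((Formula.box A).imp (Formula.box (Formula.box A))).and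
        ((Formula.dia (Formula.dia A)).imp (Formula.dia A)))
  | mp (A B : Formula) : LIK X (A.imp B) → LIK X A → LIK X B
  | nec (A : Formula) : LIK X A → LIK X (Formula.box A)


namespace LIKC

open Formula

variable {X : Set ModAx}

/-! ### Hilbert-style combinators -/

lemma tmp' {A B : Formula} (h1 : LIK X (A.imp B)) (h2 : LIK X A) : LIK X B :=
  LIK.mp A B h1 h2

local infixl:60 " ⬝ " => tmp'

lemma tid (A : Formula) : LIK X (A.imp A) :=
  (LIK.a2 A (A.imp A) A) ⬝ (LIK.a1 A (A.imp A)) ⬝ (LIK.a1 A A)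

lemma tconst {A : Formula} (B : Formula) (h : LIK X A) : LIK X (B.imp A) :=
  (LIK.a1 A B) ⬝ h

lemma tmpc {A B C : Formula} (h1 : LIK X (A.imp (B.imp C))) (h2 : LIK X (A.imp B)) :
    LIK X (A.imp C) :=
  (LIK.a2 A B C) ⬝ h1 ⬝ h2

lemma ttrans {A B C : Formula} (h1 : LIK X (A.imp B)) (h2 : LIK X (B.imp C)) :
    LIK X (A.imp C) :=
  tmpc (tconst A h2) h1

lemma tflip {A B C : Formula} (h : LIK X (A.imp (B.imp C))) :
    LIK X (B.imp (A.imp C)) :=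
  ttrans (LIK.a1 B A) (LIK.a2 A B C ⬝ h)

lemma tcontract {A C : Formula} (h : LIK X (A.imp (A.imp C))) : LIK X (A.imp C) :=
  tmpc h (tid A)

lemma tand_intro {A B C : Formula} (h1 : LIK X (A.imp B)) (h2 : LIK X (A.imp C)) :
    LIK X (A.imp (B.and C)) :=
  tmpc (ttrans h1 (LIK.a5 B C)) h2

lemma tcurry {A B C : Formula} (h : LIK X ((A.and B).imp C)) :
    LIK X (A.imp (B.imp C)) :=
  ttrans (LIK.a5 A B) (LIK.a2 B (A.and B) C ⬝ tconst B h)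

lemma tuncurry {A B C : Formula} (h : LIK X (A.imp (B.imp C))) :
    LIK X ((A.and B).imp C) :=
  tmpc (ttrans (LIK.a3 A B) h) (LIK.a4 A B)

lemma tand_mono {A A' B B' : Formula} (h1 : LIK X (A.imp A')) (h2 : LIK X (B.imp B')) :
    LIK X ((A.and B).imp (A'.and B')) :=
  tand_intro (ttrans (LIK.a3 A B) h1) (ttrans (LIK.a4 A B) h2)

lemma tor_elim {A B C : Formula} (h1 : LIK X (A.imp C)) (h2 : LIK X (B.imp C)) :
    LIK X ((A.or B).imp C) :=
  (LIK.a8 A B C) ⬝ h1 ⬝ h2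

lemma tor_mono {A A' B B' : Formula} (h1 : LIK X (A.imp A')) (h2 : LIK X (B.imp B')) :
    LIK X ((A.or B).imp (A'.or B')) :=
  tor_elim (ttrans h1 (LIK.a6 A' B')) (ttrans h2 (LIK.a7 A' B'))

/-- or-elim in a context. -/
lemma tor_elim_ctx {E A B C : Formula} (h : LIK X (E.imp (A.or B)))
    (h1 : LIK X ((E.and A).imp C)) (h2 : LIK X ((E.and B).imp C)) :
    LIK X (E.imp C) :=
  tcontract (ttrans h (tor_elim (tflip (tcurry h1)) (tflip (tcurry h2))))

lemma tbox_mono {A B : Formula} (h : LIK X (A.imp B)) :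
    LIK X ((Formula.box A).imp (Formula.box B)) :=
  (LIK.kbox A B) ⬝ (LIK.nec _ h)

lemma tdia_mono {A B : Formula} (h : LIK X (A.imp B)) :
    LIK X ((Formula.dia A).imp (Formula.dia B)) :=
  (LIK.kdia A B) ⬝ (LIK.nec _ h)

/-- `⊢ □A ∧ □B ⊃ □(A ∧ B)`. -/
lemma tbox_and (A B : Formula) :
    LIK X (((Formula.box A).and (Formula.box B)).imp (Formula.box (A.and B))) :=
  tuncurry (ttrans (tbox_mono (LIK.a5 A B)) (LIK.kbox B (A.and B)))

/-- `⊢ □B ⊃ (◇A ⊃ ◇(A ∧ B))`. -/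
lemma tdia_and_box (A B : Formula) :
    LIK X ((Formula.box B).imp ((Formula.dia A).imp (Formula.dia (A.and B)))) :=
  ttrans (tbox_mono (tflip (LIK.a5 A B))) (LIK.kdia A (A.and B))

end LIKC

namespace LIKC

open Formula

variable {X : Set ModAx}

local infixl:60 " ⬝ " => tmp'

/-! ### Conjunctions and disjunctions of lists -/

def conj : List Formula → Formula
  | [] => Formula.top
  | C :: L => C.and (conj L)

def disj : List Formula → Formula
  | [] => Formula.bot
  | C :: L => C.or (disj L)

lemma tconj_mem {L : List Formula} {C : Formula} (h : C ∈ L) :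
    LIK X ((conj L).imp C) := by
  induction L with
  | nil => cases h
  | cons D L ih =>
    rcases List.mem_cons.1 h with rfl | h
    · exact LIK.a3 _ _
    · exact ttrans (LIK.a4 _ _) (ih h)

lemma tconj_intro {E : Formula} {L : List Formula} (h : ∀ C ∈ L, LIK X (E.imp C)) :
    LIK X (E.imp (conj L)) := by
  induction L with
  | nil => exact tconst E LIK.truth
  | cons D L ih =>
    exact tand_intro (h D (by simp)) (ih fun C hC => h C (by simp [hC]))

lemma tdisj_mem {L : List Formula} {C : Formula} (h : C ∈ L) :
    LIK X (C.imp (disj L)) := by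
  induction L with
  | nil => cases h
  | cons D L ih =>
    rcases List.mem_cons.1 h with rfl | h
    · exact LIK.a6 _ _
    · exact ttrans (ih h) (LIK.a7 _ _)

lemma tdisj_elim {E : Formula} {L : List Formula} (h : ∀ C ∈ L, LIK X (C.imp E)) :
    LIK X ((disj L).imp E) := by
  induction L with
  | nil => exact LIK.exfalso E
  | cons D L ih =>
    exact tor_elim (h D (by simp)) (ih fun C hC => h C (by simp [hC]))

lemma tdisj_mono {L L' : List Formula} (h : ∀ C ∈ L, C ∈ L') :
    LIK X ((disj L).imp (disj L')) :=
  tdisj_elim fun C hC => tdisj_mem (h C hC)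

/-- `⊢ ⋀(map □ L) ⊃ □⋀L`. -/
lemma tconj_box (L : List Formula) :
    LIK X ((conj (L.map Formula.box)).imp (Formula.box (conj L))) := by
  induction L with
  | nil => exact tconst _ (LIK.nec _ LIK.truth)
  | cons D L ih =>
    exact ttrans (tand_mono (tid _) ih) (tbox_and D (conj L))

/-- Partition a list along a (classical) disjunction of properties. -/
lemma partition_list (P Q : Formula → Prop) :
    ∀ L : List Formula, (∀ C ∈ L, P C ∨ Q C) →
      ∃ L₁ L₂ : List Formula, (∀ C ∈ L₁, P C) ∧ (∀ C ∈ L₂, Q C) ∧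
        (∀ C ∈ L, C ∈ L₁ ∨ C ∈ L₂) := by
  intro L
  induction L with
  | nil => exact fun _ => ⟨[], [], by simp, by simp, by simp⟩
  | cons D L ih =>
    intro h
    obtain ⟨L₁, L₂, h1, h2, h3⟩ := ih fun C hC => h C (by simp [hC])
    rcases h D (by simp) with hP | hQ
    · refine ⟨D :: L₁, L₂, ?_, h2, ?_⟩
      · intro C hC; rcases List.mem_cons.1 hC with rfl | hC; exact hP; exact h1 C hC
      · intro C hC; rcases List.mem_cons.1 hC with rfl | hC
        · exact Or.inl (by simp)
        · rcases h3 C hC with h | h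
          · exact Or.inl (by simp [h])
          · exact Or.inr h
    · refine ⟨L₁, D :: L₂, h1, ?_, ?_⟩
      · intro C hC; rcases List.mem_cons.1 hC with rfl | hC; exact hQ; exact h2 C hC
      · intro C hC; rcases List.mem_cons.1 hC with rfl | hC
        · exact Or.inr (by simp)
        · rcases h3 C hC with h | h
          · exact Or.inl h
          · exact Or.inr (by simp [h])

lemma tdisj_split {L L₁ L₂ : List Formula} (h : ∀ C ∈ L, C ∈ L₁ ∨ C ∈ L₂) :
    LIK X ((disj L).imp ((disj L₁).or (disj L₂))) :=
  tdisj_elim fun C hC => by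
    rcases h C hC with h' | h'
    · exact ttrans (tdisj_mem h') (LIK.a6 _ _)
    · exact ttrans (tdisj_mem h') (LIK.a7 _ _)

lemma tconj_split {L L₁ L₂ : List Formula} (h : ∀ C ∈ L, C ∈ L₁ ∨ C ∈ L₂) :
    LIK X (((conj L₁).and (conj L₂)).imp (conj L)) :=
  tconj_intro fun C hC => by
    rcases h C hC with h' | h'
    · exact ttrans (LIK.a3 _ _) (tconj_mem h')
    · exact ttrans (LIK.a4 _ _) (tconj_mem h')

end LIKC

namespace LIKC

open Formula

variable {X : Set ModAx}

local infixl:60 " ⬝ " => tmp'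

/-! ### Prime theories -/

/-- Provability from a set of hypotheses. -/
def Prov (X : Set ModAx) (S : Set Formula) (B : Formula) : Prop :=
  ∃ L : List Formula, (∀ C ∈ L, C ∈ S) ∧ LIK X ((conj L).imp B)

structure IsTheory (X : Set ModAx) (T : Set Formula) : Prop where
  closed : ∀ B, Prov X T B → B ∈ T
  prime : ∀ A B, A.or B ∈ T → A ∈ T ∨ B ∈ T
  cons : Formula.bot ∉ T

namespace IsTheory

variable {T : Set Formula} (hT : IsTheory X T)
include hT

lemma thm_mem {B : Formula} (h : LIK X B) : B ∈ T :=
  hT.closed B ⟨[], by simp, tconst _ h⟩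

lemma mem_of_list {L : List Formula} {B : Formula} (hL : ∀ C ∈ L, C ∈ T)
    (h : LIK X ((conj L).imp B)) : B ∈ T :=
  hT.closed B ⟨L, hL, h⟩

lemma mp_mem {A B : Formula} (h : A.imp B ∈ T) (hA : A ∈ T) : B ∈ T :=
  hT.mem_of_list (L := [A.imp B, A])
    (by intro C hC; simp only [List.mem_cons, List.not_mem_nil, or_false] at hC
        rcases hC with rfl | rfl; exact h; exact hA)
    (tmpc (tconj_mem (show A.imp B ∈ [A.imp B, A] by simp))
      (tconj_mem (show A ∈ [A.imp B, A] by simp)))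

lemma mp_thm {A B : Formula} (h : LIK X (A.imp B)) (hA : A ∈ T) : B ∈ T :=
  hT.mp_mem (hT.thm_mem h) hA

lemma conj_mem {L : List Formula} (hL : ∀ C ∈ L, C ∈ T) : conj L ∈ T :=
  hT.mem_of_list hL (tid _)

/-- From `◇(⋁Δ) ∈ T` get a disjunct `D` with `◇D ∈ T`. -/
lemma dia_disj_mem {Δ : List Formula} (h : Formula.dia (disj Δ) ∈ T) :
    ∃ D ∈ Δ, Formula.dia D ∈ T := by
  induction Δ with
  | nil => exact absurd (hT.mp_thm LIK.nax h) hT.cons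
  | cons D Δ ih =>
    have : (Formula.dia D).or (Formula.dia (disj Δ)) ∈ T :=
      hT.mp_thm (LIK.dp D (disj Δ)) h
    rcases hT.prime _ _ this with h' | h'
    · exact ⟨D, by simp, h'⟩
    · obtain ⟨D', hD', h''⟩ := ih h'
      exact ⟨D', by simp [hD'], h''⟩

/-- From `⋁Δ ∈ T` get a disjunct in `T`. -/
lemma disj_mem {Δ : List Formula} (h : disj Δ ∈ T) : ∃ D ∈ Δ, D ∈ T := by
  induction Δ with
  | nil => exact absurd h hT.cons
  | cons D Δ ih =>
    rcases hT.prime _ _ h with h' | h'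
    · exact ⟨D, by simp, h'⟩
    · obtain ⟨D', hD', h''⟩ := ih h'
      exact ⟨D', by simp [hD'], h''⟩

/-- If every element of `L` is boxed in `T` then `□⋀L ∈ T`. -/
lemma box_conj_mem {L : List Formula} (hL : ∀ C ∈ L, Formula.box C ∈ T) :
    Formula.box (conj L) ∈ T :=
  hT.mem_of_list (L := L.map Formula.box) (by simpa using hL) (tconj_box L)

end IsTheory

end LIKC

namespace LIKC

open Formula

/-! ### An enumeration of formulas -/

def encF : Formula → ℕ
  | .atom p => Nat.pair 0 p
  | .top => Nat.pair 1 0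
  | .bot => Nat.pair 2 0
  | .and A B => Nat.pair 3 (Nat.pair (encF A) (encF B))
  | .or A B => Nat.pair 4 (Nat.pair (encF A) (encF B))
  | .imp A B => Nat.pair 5 (Nat.pair (encF A) (encF B))
  | .box A => Nat.pair 6 (encF A)
  | .dia A => Nat.pair 7 (encF A)

lemma encF_inj : ∀ (A B : Formula), encF A = encF B → A = B := by
  intro A
  induction A with
  | atom p => intro B h; cases B <;> simp [encF, Nat.pair_eq_pair] at h <;> simp [h]
  | top => intro B h; cases B <;> simp [encF, Nat.pair_eq_pair] at h <;> rfl
  | bot => intro B h; cases B <;> simp [encF, Nat.pair_eq_pair] at h <;> rfl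
  | and A₁ A₂ ih1 ih2 =>
    intro B h; cases B <;> simp [encF, Nat.pair_eq_pair] at h
    rw [ih1 _ h.1, ih2 _ h.2]
  | or A₁ A₂ ih1 ih2 =>
    intro B h; cases B <;> simp [encF, Nat.pair_eq_pair] at h
    rw [ih1 _ h.1, ih2 _ h.2]
  | imp A₁ A₂ ih1 ih2 =>
    intro B h; cases B <;> simp [encF, Nat.pair_eq_pair] at h
    rw [ih1 _ h.1, ih2 _ h.2]
  | box A ih =>
    intro B h; cases B <;> simp [encF, Nat.pair_eq_pair] at h
    rw [ih _ h]
  | dia A ih =>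
    intro B h; cases B <;> simp [encF, Nat.pair_eq_pair] at h
    rw [ih _ h]

open Classical in
noncomputable def enumF (n : ℕ) : Formula :=
  if h : ∃ A, encF A = n then h.choose else Formula.top

lemma enumF_surj (A : Formula) : ∃ n, enumF n = A := by
  refine ⟨encF A, ?_⟩
  have h : ∃ B, encF B = encF A := ⟨A, rfl⟩
  simp only [enumF, dif_pos h]
  exact encF_inj _ _ h.choose_spec

end LIKC

namespace LIKC

open Formula

/-! ### The pair extension lemma -/

/-- The invariant of the pair extension construction: no finite conjunction
from `u` provably implies a finite disjunction from `v0`. -/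
def Inv (X : Set ModAx) (v0 u : Set Formula) : Prop :=
  ∀ (L Δ : List Formula), (∀ C ∈ L, C ∈ u) → (∀ D ∈ Δ, D ∈ v0) →
    ¬ LIK X ((conj L).imp (disj Δ))

lemma Inv.anti {X : Set ModAx} {v0 u u' : Set Formula} (h : Inv X v0 u) (hsub : u' ⊆ u) :
    Inv X v0 u' :=
  fun L Δ hL hΔ => h L Δ (fun C hC => hsub (hL C hC)) hΔ

open Classical in
/-- The approximation chain of the pair extension construction. -/
noncomputable def chain (X : Set ModAx) (v0 u0 : Set Formula) : ℕ → Set Formula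
  | 0 => u0
  | n + 1 =>
    if Inv X v0 (chain X v0 u0 n ∪ {enumF n}) then chain X v0 u0 n ∪ {enumF n}
    else chain X v0 u0 n

variable {X : Set ModAx} {v0 u0 : Set Formula}

lemma chain_mono_succ (n : ℕ) : chain X v0 u0 n ⊆ chain X v0 u0 (n + 1) := by
  by_cases h : Inv X v0 (chain X v0 u0 n ∪ {enumF n})
  · simp only [chain]; rw [if_pos h]; exact Set.subset_union_left
  · simp only [chain]; rw [if_neg h]

lemma chain_mono {m n : ℕ} (h : m ≤ n) : chain X v0 u0 m ⊆ chain X v0 u0 n := by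
  induction n with
  | zero => simpa [Nat.le_zero.1 h]
  | succ n ih =>
    rcases Nat.le_succ_iff.1 h with h' | h'
    · exact (ih h').trans (chain_mono_succ n)
    · simp [h']

lemma chain_inv (h0 : Inv X v0 u0) (n : ℕ) : Inv X v0 (chain X v0 u0 n) := by
  induction n with
  | zero => exact h0
  | succ n ih =>
    by_cases h : Inv X v0 (chain X v0 u0 n ∪ {enumF n})
    · simp only [chain]; rwa [if_pos h]
    · simp only [chain]; rwa [if_neg h]

/-- The limit of the chain. -/
def limitSet (X : Set ModAx) (v0 u0 : Set Formula) : Set Formula :=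
  ⋃ n, chain X v0 u0 n

lemma list_subset_chain {L : List Formula} (hL : ∀ C ∈ L, C ∈ limitSet X v0 u0) :
    ∃ n, ∀ C ∈ L, C ∈ chain X v0 u0 n := by
  induction L with
  | nil => exact ⟨0, by simp⟩
  | cons D L ih =>
    obtain ⟨n, hn⟩ := ih fun C hC => hL C (by simp [hC])
    obtain ⟨m, hm⟩ := Set.mem_iUnion.1 (hL D (by simp))
    refine ⟨max m n, fun C hC => ?_⟩
    rcases List.mem_cons.1 hC with rfl | hC
    · exact chain_mono (le_max_left m n) hm
    · exact chain_mono (le_max_right m n) (hn C hC)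

lemma limit_inv (h0 : Inv X v0 u0) : Inv X v0 (limitSet X v0 u0) := by
  intro L Δ hL hΔ hthm
  obtain ⟨n, hn⟩ := list_subset_chain hL
  exact chain_inv h0 n L Δ hn hΔ hthm

lemma mem_limit_of_inv (h0 : Inv X v0 u0) {B : Formula}
    (h : Inv X v0 (limitSet X v0 u0 ∪ {B})) : B ∈ limitSet X v0 u0 := by
  obtain ⟨n, hn⟩ := enumF_surj B
  have hsub : chain X v0 u0 n ∪ {enumF n} ⊆ limitSet X v0 u0 ∪ {B} := by
    rw [hn]
    exact Set.union_subset_union_left _ (Set.subset_iUnion (chain X v0 u0) n)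
  have : Inv X v0 (chain X v0 u0 n ∪ {enumF n}) := h.anti hsub
  have hmem : B ∈ chain X v0 u0 (n + 1) := by
    simp only [chain, if_pos this]
    simp [hn]
  exact Set.mem_iUnion.2 ⟨n + 1, hmem⟩

/-- The pair extension lemma. -/
lemma pair_extension (h0 : Inv X v0 u0) :
    ∃ U : Set Formula, u0 ⊆ U ∧ (∀ B ∈ U, B ∉ v0) ∧ IsTheory X U ∧ Inv X v0 U := by
  classical
  set U := limitSet X v0 u0 with hU
  have hinv : Inv X v0 U := limit_inv h0
  have hsub : u0 ⊆ U := Set.subset_iUnion (chain X v0 u0) 0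
  -- closure
  have hclosed : ∀ B, Prov X U B → B ∈ U := by
    intro B ⟨L0, hL0, hL0thm⟩
    refine mem_limit_of_inv h0 ?_
    intro L Δ hL hΔ hthm
    set M := L0 ++ L.filter (fun C => C ≠ B) with hM
    have hMU : ∀ C ∈ M, C ∈ U := by
      intro C hC
      rcases List.mem_append.1 hC with hC | hC
      · exact hL0 C hC
      · have := List.of_mem_filter hC
        have hCL := List.mem_of_mem_filter hC
        rcases hL C hCL with h' | h'
        · exact h'
        · simp_all
    have hML : LIK X ((conj M).imp (conj L)) := by
      refine tconj_intro fun C hC => ?_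
      by_cases hCB : C = B
      · subst hCB
        refine ttrans (tconj_intro fun D hD => tconj_mem (List.mem_append_left _ hD)) hL0thm
      · exact tconj_mem (List.mem_append_right _ (List.mem_filter.2 ⟨hC, by simp [hCB]⟩))
    exact hinv M Δ hMU hΔ (ttrans hML hthm)
  -- primeness
  have hprime : ∀ A B, A.or B ∈ U → A ∈ U ∨ B ∈ U := by
    intro A B hor
    by_contra hcon
    push_neg at hcon
    obtain ⟨hA, hB⟩ := hcon
    have hAi : ¬ Inv X v0 (U ∪ {A}) := fun h => hA (mem_limit_of_inv h0 h)
    have hBi : ¬ Inv X v0 (U ∪ {B}) := fun h => hB (mem_limit_of_inv h0 h)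
    simp only [Inv, not_forall] at hAi hBi
    obtain ⟨L₁, Δ₁, hL₁, hΔ₁, hthm₁⟩ := hAi
    obtain ⟨L₂, Δ₂, hL₂, hΔ₂, hthm₂⟩ := hBi
    rw [not_not] at hthm₁ hthm₂
    set M := (A.or B) :: (L₁.filter (fun C => C ≠ A) ++ L₂.filter (fun C => C ≠ B)) with hMdef
    have hMU : ∀ C ∈ M, C ∈ U := by
      intro C hC
      rcases List.mem_cons.1 hC with rfl | hC
      · exact hor
      · rcases List.mem_append.1 hC with hC | hC
        · have := List.of_mem_filter hC
          rcases hL₁ C (List.mem_of_mem_filter hC) with h' | h'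
          · exact h'
          · simp_all
        · have := List.of_mem_filter hC
          rcases hL₂ C (List.mem_of_mem_filter hC) with h' | h'
          · exact h'
          · simp_all
    have key : LIK X ((conj M).imp (disj (Δ₁ ++ Δ₂))) := by
      refine tor_elim_ctx (tconj_mem (show A.or B ∈ M by simp [hMdef])) ?_ ?_
      · have h1 : LIK X (((conj M).and A).imp (conj L₁)) := by
          refine tconj_intro fun C hC => ?_
          by_cases hCA : C = A
          · subst hCA; exact LIK.a4 _ _
          · refine ttrans (LIK.a3 _ _) (tconj_mem ?_)
            exact List.mem_cons_of_mem _ (List.mem_append_left _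
              (List.mem_filter.2 ⟨hC, by simp [hCA]⟩))
        exact ttrans h1 (ttrans hthm₁ (tdisj_mono fun D hD => List.mem_append_left _ hD))
      · have h1 : LIK X (((conj M).and B).imp (conj L₂)) := by
          refine tconj_intro fun C hC => ?_
          by_cases hCB : C = B
          · subst hCB; exact LIK.a4 _ _
          · refine ttrans (LIK.a3 _ _) (tconj_mem ?_)
            exact List.mem_cons_of_mem _ (List.mem_append_right _
              (List.mem_filter.2 ⟨hC, by simp [hCB]⟩))
        exact ttrans h1 (ttrans hthm₂ (tdisj_mono fun D hD => List.mem_append_right _ hD))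
    exact hinv M (Δ₁ ++ Δ₂) hMU
      (fun D hD => (List.mem_append.1 hD).elim (hΔ₁ D) (hΔ₂ D)) key
  -- disjointness from v0
  have hdisj : ∀ B ∈ U, B ∉ v0 := by
    intro B hB hBv
    exact hinv [B] [B] (by simpa using hB) (by simpa using hBv)
      (ttrans (LIK.a3 _ _) (tdisj_mem (by simp)))
  -- consistency
  have hcons : Formula.bot ∉ U := by
    intro hbot
    exact hinv [Formula.bot] [] (by simpa using hbot) (by simp)
      (LIK.a3 _ _)
  exact ⟨U, hsub, hdisj, ⟨hclosed, hprime, hcons⟩, hinv⟩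

end LIKC

namespace LIKC

open Formula

variable {X : Set ModAx}

/-! ### The canonical model -/

/-- Worlds of the canonical model. -/
def CW (X : Set ModAx) : Type := {T : Set Formula // IsTheory X T}

/-- Canonical accessibility relation. -/
def canR (T U : CW X) : Prop :=
  (∀ B, Formula.box B ∈ T.1 → B ∈ U.1) ∧ (∀ B, B ∈ U.1 → Formula.dia B ∈ T.1)

/-- The canonical model. -/
def canM (X : Set ModAx) : Model (CW X) where
  le T U := T.1 ⊆ U.1
  rel := canR
  val p T := Formula.atom p ∈ T.1
  le_refl T := Set.Subset.refl _
  le_trans T U V h1 h2 := h1.trans h2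
  val_mono p T U h hp := h hp

/-- Lindenbaum lemma for the implication case. -/
lemma exists_imp_world {T : Set Formula} (hT : IsTheory X T) {A B : Formula}
    (h : A.imp B ∉ T) :
    ∃ U : Set Formula, IsTheory X U ∧ T ⊆ U ∧ A ∈ U ∧ B ∉ U := by
  have h0 : Inv X {B} (T ∪ {A}) := by
    intro L Δ hL hΔ hthm
    apply h
    have hdisj : LIK X ((disj Δ).imp B) := tdisj_elim fun D hD => by
      have := hΔ D hD; simp only [Set.mem_singleton_iff] at this; subst this; exact tid _
    set L₁ := L.filter (fun C => C ≠ A) with hL₁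
    have hL₁T : ∀ C ∈ L₁, C ∈ T := by
      intro C hC
      have := List.of_mem_filter hC
      rcases hL C (List.mem_of_mem_filter hC) with h' | h'
      · exact h'
      · simp_all
    have hstep : LIK X (((conj L₁).and A).imp (conj L)) := by
      refine tconj_intro fun C hC => ?_
      by_cases hCA : C = A
      · subst hCA; exact LIK.a4 _ _
      · exact ttrans (LIK.a3 _ _) (tconj_mem (List.mem_filter.2 ⟨hC, by simp [hCA]⟩))
    have : LIK X ((conj L₁).imp (A.imp B)) :=
      tcurry (ttrans hstep (ttrans hthm hdisj))
    exact hT.mem_of_list hL₁T this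
  obtain ⟨U, hsub, hdisj, hth, _⟩ := pair_extension h0
  exact ⟨U, hth, fun C hC => hsub (Or.inl hC), hsub (Or.inr rfl),
    fun hB => hdisj B hB rfl⟩

/-- Existence lemma for ◇. -/
lemma exists_dia_world {T : Set Formula} (hT : IsTheory X T) {A : Formula}
    (h : Formula.dia A ∈ T) :
    ∃ U : Set Formula, IsTheory X U ∧ A ∈ U ∧
      (∀ B, Formula.box B ∈ T → B ∈ U) ∧ (∀ B, B ∈ U → Formula.dia B ∈ T) := by
  have h0 : Inv X {B | Formula.dia B ∉ T} ({A} ∪ {B | Formula.box B ∈ T}) := by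
    intro L Δ hL hΔ hthm
    set L₁ := L.filter (fun C => C ≠ A) with hL₁
    have hL₁T : ∀ C ∈ L₁, Formula.box C ∈ T := by
      intro C hC
      have := List.of_mem_filter hC
      rcases hL C (List.mem_of_mem_filter hC) with h' | h'
      · simp_all
      · exact h'
    have hbox : Formula.box (conj L₁) ∈ T := hT.box_conj_mem hL₁T
    have hdia : Formula.dia (A.and (conj L₁)) ∈ T :=
      hT.mp_mem (hT.mp_thm (tdia_and_box A (conj L₁)) hbox) h
    have hstep : LIK X ((A.and (conj L₁)).imp (conj L)) := by
      refine tconj_intro fun C hC => ?_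
      by_cases hCA : C = A
      · subst hCA; exact LIK.a3 _ _
      · exact ttrans (LIK.a4 _ _) (tconj_mem (List.mem_filter.2 ⟨hC, by simp [hCA]⟩))
    have hdiadisj : Formula.dia (disj Δ) ∈ T :=
      hT.mp_thm (tdia_mono (ttrans hstep hthm)) hdia
    obtain ⟨D, hD, hDT⟩ := hT.dia_disj_mem hdiadisj
    exact hΔ D hD hDT
  obtain ⟨U, hsub, hdisj, hth, _⟩ := pair_extension h0
  refine ⟨U, hth, hsub (Or.inl rfl), fun B hB => hsub (Or.inr hB), fun B hB => ?_⟩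
  by_contra hdia
  exact hdisj B hB hdia

/-- Existence lemma for □. -/
lemma exists_box_world {T : Set Formula} (hT : IsTheory X T) {A : Formula}
    (h : Formula.box A ∉ T) :
    ∃ U : Set Formula, IsTheory X U ∧ A ∉ U ∧
      (∀ B, Formula.box B ∈ T → B ∈ U) ∧ (∀ B, B ∈ U → Formula.dia B ∈ T) := by
  have h0 : Inv X ({A} ∪ {B | Formula.dia B ∉ T}) {B | Formula.box B ∈ T} := by
    intro L Δ hL hΔ hthm
    have hbox : Formula.box (conj L) ∈ T := hT.box_conj_mem hL
    obtain ⟨Δ₁, Δ₂, hΔ₁, hΔ₂, hsplit⟩ :=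
      partition_list (fun D => D = A) (fun D => Formula.dia D ∉ T) Δ
        (fun D hD => by rcases hΔ D hD with h' | h'; exact Or.inl h'; exact Or.inr h')
    have hΔ₁A : LIK X ((disj Δ₁).imp A) :=
      tdisj_elim fun D hD => by rw [hΔ₁ D hD]; exact tid _
    have himp : LIK X ((conj L).imp ((disj Δ₂).or A)) :=
      ttrans hthm (ttrans (tdisj_split hsplit)
        (tor_elim (ttrans hΔ₁A (LIK.a7 _ _)) (LIK.a6 _ _)))
    have hboxor : Formula.box ((disj Δ₂).or A) ∈ T :=
      hT.mp_thm (tbox_mono himp) hbox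
    have hrv : (Formula.dia (disj Δ₂)).or (Formula.box A) ∈ T :=
      hT.mp_thm (LIK.rv (disj Δ₂) A) hboxor
    rcases hT.prime _ _ hrv with h' | h'
    · obtain ⟨D, hD, hDT⟩ := hT.dia_disj_mem h'
      exact hΔ₂ D hD hDT
    · exact h h'
  obtain ⟨U, hsub, hdisj, hth, _⟩ := pair_extension h0
  refine ⟨U, hth, fun hA => hdisj A hA (Or.inl rfl), fun B hB => hsub hB, fun B hB => ?_⟩
  by_contra hdia
  exact hdisj B hB (Or.inr hdia)

/-- Forward confluence lemma. -/
lemma exists_forward {T T' U : Set Formula} (hT' : IsTheory X T') (hU : IsTheory X U)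
    (hsub : T ⊆ T')
    (hR1 : ∀ B, Formula.box B ∈ T → B ∈ U) (hR2 : ∀ B, B ∈ U → Formula.dia B ∈ T) :
    ∃ U' : Set Formula, IsTheory X U' ∧ U ⊆ U' ∧
      (∀ B, Formula.box B ∈ T' → B ∈ U') ∧ (∀ B, B ∈ U' → Formula.dia B ∈ T') := by
  have h0 : Inv X {B | Formula.dia B ∉ T'} (U ∪ {B | Formula.box B ∈ T'}) := by
    intro L Δ hL hΔ hthm
    obtain ⟨L₁, L₂, hL₁, hL₂, hsplit⟩ :=
      partition_list (fun C => C ∈ U) (fun C => Formula.box C ∈ T') L hL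
    have hconj₁ : conj L₁ ∈ U := hU.conj_mem hL₁
    have hdia₁ : Formula.dia (conj L₁) ∈ T' := hsub (hR2 _ hconj₁)
    have hbox₂ : Formula.box (conj L₂) ∈ T' := hT'.box_conj_mem hL₂
    have hdia : Formula.dia ((conj L₁).and (conj L₂)) ∈ T' :=
      hT'.mp_mem (hT'.mp_thm (tdia_and_box (conj L₁) (conj L₂)) hbox₂) hdia₁
    have hdiadisj : Formula.dia (disj Δ) ∈ T' :=
      hT'.mp_thm (tdia_mono (ttrans (tconj_split hsplit) hthm)) hdia
    obtain ⟨D, hD, hDT⟩ := hT'.dia_disj_mem hdiadisj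
    exact hΔ D hD hDT
  obtain ⟨U', hsub', hdisj, hth, _⟩ := pair_extension h0
  refine ⟨U', hth, fun C hC => hsub' (Or.inl hC), fun B hB => hsub' (Or.inr hB),
    fun B hB => ?_⟩
  by_contra hdia
  exact hdisj B hB hdia

/-- Downward confluence lemma. -/
lemma exists_downward {T T' U' : Set Formula} (hT : IsTheory X T) (hU' : IsTheory X U')
    (hsub : T ⊆ T')
    (hR1 : ∀ B, Formula.box B ∈ T' → B ∈ U') (hR2 : ∀ B, B ∈ U' → Formula.dia B ∈ T') :
    ∃ U : Set Formula, IsTheory X U ∧ U ⊆ U' ∧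
      (∀ B, Formula.box B ∈ T → B ∈ U) ∧ (∀ B, B ∈ U → Formula.dia B ∈ T) := by
  have h0 : Inv X ({B | Formula.dia B ∉ T} ∪ {B | B ∉ U'}) {B | Formula.box B ∈ T} := by
    intro L Δ hL hΔ hthm
    have hbox : Formula.box (conj L) ∈ T := hT.box_conj_mem hL
    obtain ⟨Δ₁, Δ₂, hΔ₁, hΔ₂, hsplit⟩ :=
      partition_list (fun D => Formula.dia D ∉ T) (fun D => D ∉ U') Δ
        (fun D hD => by rcases hΔ D hD with h' | h'; exact Or.inl h'; exact Or.inr h')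
    have hboxor : Formula.box ((disj Δ₁).or (disj Δ₂)) ∈ T :=
      hT.mp_thm (tbox_mono (ttrans hthm (tdisj_split hsplit))) hbox
    have hrv : (Formula.dia (disj Δ₁)).or (Formula.box (disj Δ₂)) ∈ T :=
      hT.mp_thm (LIK.rv (disj Δ₁) (disj Δ₂)) hboxor
    rcases hT.prime _ _ hrv with h' | h'
    · obtain ⟨D, hD, hDT⟩ := hT.dia_disj_mem h'
      exact hΔ₁ D hD hDT
    · have : disj Δ₂ ∈ U' := hR1 _ (hsub h')
      obtain ⟨D, hD, hDU⟩ := hU'.disj_mem this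
      exact hΔ₂ D hD hDU
  obtain ⟨U, hsubU, hdisj, hth, _⟩ := pair_extension h0
  refine ⟨U, hth, fun B hB => ?_, fun B hB => hsubU hB, fun B hB => ?_⟩
  · by_contra hB'
    exact hdisj B hB (Or.inr hB')
  · by_contra hdia
    exact hdisj B hB (Or.inl hdia)

end LIKC

namespace LIKC

open Formula

variable {X : Set ModAx}

/-! ### The truth lemma -/

lemma truth_lemma : ∀ (A : Formula) (T : CW X), Force (canM X) T A ↔ A ∈ T.1 := by
  intro A
  induction A with
  | atom p => intro T; exact Iff.rfl
  | top => intro T; simpa [Force] using T.2.thm_mem LIK.truth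
  | bot => intro T; simpa [Force] using T.2.cons
  | and A B ihA ihB =>
    intro T
    simp only [Force, ihA, ihB]
    constructor
    · rintro ⟨hA, hB⟩
      exact T.2.mp_mem (T.2.mp_thm (LIK.a5 A B) hA) hB
    · intro hmem
      exact ⟨T.2.mp_thm (LIK.a3 A B) hmem, T.2.mp_thm (LIK.a4 A B) hmem⟩
  | or A B ihA ihB =>
    intro T
    simp only [Force, ihA, ihB]
    constructor
    · rintro (hA | hB)
      · exact T.2.mp_thm (LIK.a6 A B) hA
      · exact T.2.mp_thm (LIK.a7 A B) hB
    · exact T.2.prime A B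
  | imp A B ihA ihB =>
    intro T
    constructor
    · intro hF
      by_contra hmem
      obtain ⟨U, hth, hsub, hA, hB⟩ := exists_imp_world T.2 hmem
      exact hB ((ihB ⟨U, hth⟩).1 (hF ⟨U, hth⟩ hsub ((ihA ⟨U, hth⟩).2 hA)))
    · intro hmem U hle hA
      exact (ihB U).2 (U.2.mp_mem (hle hmem) ((ihA U).1 hA))
  | box A ihA =>
    intro T
    constructor
    · intro hF
      by_contra hmem
      obtain ⟨U, hth, hA, h1, h2⟩ := exists_box_world T.2 hmem
      exact hA ((ihA ⟨U, hth⟩).1 (hF ⟨U, hth⟩ ⟨h1, h2⟩))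
    · intro hmem U hrel
      exact (ihA U).2 (hrel.1 A hmem)
  | dia A ihA =>
    intro T
    constructor
    · rintro ⟨U, hrel, hA⟩
      exact hrel.2 A ((ihA U).1 hA)
    · intro hmem
      obtain ⟨U, hth, hA, h1, h2⟩ := exists_dia_world T.2 hmem
      exact ⟨⟨U, hth⟩, ⟨h1, h2⟩, (ihA ⟨U, hth⟩).2 hA⟩

/-! ### Frame properties of the canonical model -/

lemma canM_forward : ForwardConfluent (canM X) := by
  rintro T T' U hle ⟨h1, h2⟩
  obtain ⟨U', hth, hsub, h1', h2'⟩ := exists_forward T'.2 U.2 hle h1 h2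
  exact ⟨⟨U', hth⟩, ⟨h1', h2'⟩, hsub⟩

lemma canM_downward : DownwardConfluent (canM X) := by
  rintro T T' U' hle ⟨h1, h2⟩
  obtain ⟨U, hth, hsub, h1', h2'⟩ := exists_downward T.2 U'.2 hle h1 h2
  exact ⟨⟨U, hth⟩, ⟨h1', h2'⟩, hsub⟩

lemma canM_serial (hD : ModAx.D ∈ X) : ∀ T : CW X, ∃ U, (canM X).rel T U := by
  intro T
  obtain ⟨U, hth, _, h1, h2⟩ := exists_dia_world T.2 (T.2.thm_mem (LIK.dax hD))
  exact ⟨⟨U, hth⟩, h1, h2⟩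

lemma canM_refl (hTax : ModAx.T ∈ X) : ∀ T : CW X, (canM X).rel T T := by
  intro T
  constructor
  · intro B hB
    exact T.2.mp_thm (tmp' (LIK.a3 _ _) (LIK.tax B hTax)) hB
  · intro B hB
    exact T.2.mp_thm (tmp' (LIK.a4 _ _) (LIK.tax B hTax)) hB

lemma canM_trans (h4 : ModAx.Four ∈ X) :
    ∀ T U V : CW X, (canM X).rel T U → (canM X).rel U V → (canM X).rel T V := by
  rintro T U V ⟨h1, h2⟩ ⟨h1', h2'⟩
  constructor
  · intro B hB
    exact h1' B (h1 _ (T.2.mp_thm (tmp' (LIK.a3 _ _) (LIK.fourax B h4)) hB))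
  · intro B hB
    exact T.2.mp_thm (tmp' (LIK.a4 _ _) (LIK.fourax B h4)) (h2 _ (h2' B hB))

/-! ### The root world -/

lemma exists_root {A : Formula} (h : ¬ LIK X A) :
    ∃ T : Set Formula, IsTheory X T ∧ A ∉ T := by
  have h0 : Inv X {A} (∅ : Set Formula) := by
    intro L Δ hL hΔ hthm
    have hLnil : L = [] := List.eq_nil_iff_forall_not_mem.2 fun C hC => hL C hC
    subst hLnil
    have hdisj : LIK X ((disj Δ).imp A) := tdisj_elim fun D hD => by
      have := hΔ D hD; simp only [Set.mem_singleton_iff] at this; subst this; exact tid _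
    exact h (tmp' (ttrans hthm hdisj) LIK.truth)
  obtain ⟨T, _, hdisj, hth, _⟩ := pair_extension h0
  exact ⟨T, hth, fun hA => hdisj A hA rfl⟩

end LIKC
/-- Completeness of LIK X: every formula valid in all models based on forward
and downward confluent frames whose accessibility relation is moreover serial
if D ∈ X, reflexive if T ∈ X and transitive if 4 ∈ X, is LIK X-derivable. -/
theorem likx_completeness (X : Set ModAx) (A : Formula)
    (h : ∀ (W : Type) (M : Model W), Nonempty W →
      ForwardConfluent M → DownwardConfluent M →
      (ModAx.D ∈ X → ∀ x, ∃ y, M.rel x y) →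
      (ModAx.T ∈ X → ∀ x, M.rel x x) →
      (ModAx.Four ∈ X → ∀ x y z, M.rel x y → M.rel y z → M.rel x z) →
      ∀ x : W, Force M x A) :
    LIK X A := by
  by_contra hA
  obtain ⟨T0, hth, hAT⟩ := LIKC.exists_root hA
  have hforce := h (LIKC.CW X) (LIKC.canM X) ⟨⟨T0, hth⟩⟩ LIKC.canM_forward
    LIKC.canM_downward (fun hD => LIKC.canM_serial hD) (fun hT => LIKC.canM_refl hT)
    (fun h4 x y z => LIKC.canM_trans h4 x y z)
  exact hAT ((LIKC.truth_lemma A ⟨T0, hth⟩).1 (hforce ⟨T0, hth⟩))
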